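/- arXiv:1002.1785 — 3 statements merged into one kernel-verified Lean document; each statement's English description precedes it below -/
import Mathlib

section
/- Fix constants G, δ, D > 0 and real numbers ξ₁, ξ₂, ξ₃ > 0 and s ≤ 0. Consider the real 3×3 matrix a with rows ( (G/3)ξ₁³, 0, −(ξ₁²/2)s ), ( (G/3)ξ₁²ξ₂ − δξ₂/ξ₁, δ, −(1/2)ξ₁ξ₂s ), ( (G/2)ξ₁²ξ₃, 0, D − ξ₁ξ₃s ). Then every complex eigenvalue of a is real and positive. -/
/-!
The middle column of `a` is `δ e₂`, so the characteristic polynomial splits as `(X - δ)` times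
the characteristic polynomial of the `2 × 2` block on the coordinates `h, Γ`. That block has
off-diagonal entries of the same sign (`-ξ₁² s / 2 ≥ 0` and `G ξ₁² ξ₃ / 2 > 0`), hence a
nonnegative discriminant and real eigenvalues, and positive trace and determinant
`G ξ₁³ D / 3 - G ξ₁⁴ ξ₃ s / 12`, hence positive eigenvalues.
-/

open Polynomial

lemma Matrix.charpoly_fin_three_of_col_one {R : Type*} [CommRing R]
    (M : Matrix (Fin 3) (Fin 3) R) (h01 : M 0 1 = 0) (h21 : M 2 1 = 0) :
    M.charpoly = (X - C (M 1 1)) * ((X - C (M 0 0)) * (X - C (M 2 2)) - C (M 0 2 * M 2 0)) := by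
  rw [Matrix.charpoly, Matrix.det_fin_three]
  simp only [Matrix.charmatrix_apply, Matrix.diagonal_apply, h01, h21]
  simp only [Fin.reduceEq, if_true, if_false, C_mul, C_0]
  ring

lemma Complex.im_eq_zero_of_mul_sub_eq_ofReal {μ : ℂ} {a d r : ℝ} (hr : 0 ≤ r)
    (h : (μ - a) * (μ - d) = r) : μ.im = 0 := by
  have him := congrArg Complex.im h
  have hre := congrArg Complex.re h
  simp only [Complex.mul_im, Complex.mul_re, Complex.sub_re, Complex.sub_im,
    Complex.ofReal_re, Complex.ofReal_im, sub_zero] at him hre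
  by_contra hne
  -- the imaginary part forces `μ.re` to be the midpoint of `a` and `d`
  have hmid : μ.re - d = -(μ.re - a) := by
    have := mul_right_cancel₀ hne (show (μ.re - a + (μ.re - d)) * μ.im = 0 * μ.im by linarith)
    linarith
  rw [hmid] at hre
  nlinarith [mul_self_pos.mpr hne, mul_self_nonneg (μ.re - a)]

lemma pos_of_mul_sub_eq {x a d r : ℝ} (hsum : 0 ≤ a + d) (hdet : r < a * d)
    (h : (x - a) * (x - d) = r) : 0 < x := by
  by_contra! hx
  nlinarith [mul_nonneg (neg_nonneg.mpr hx) hsum, mul_self_nonneg x]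

lemma Complex.im_eq_zero_and_re_pos_of_mul_sub_eq_ofReal {μ : ℂ} {a d r : ℝ} (hr : 0 ≤ r)
    (hsum : 0 ≤ a + d) (hdet : r < a * d) (h : (μ - a) * (μ - d) = r) :
    μ.im = 0 ∧ 0 < μ.re := by
  have him := Complex.im_eq_zero_of_mul_sub_eq_ofReal hr h
  refine ⟨him, pos_of_mul_sub_eq hsum hdet ?_⟩
  have hμ : μ = (μ.re : ℂ) := Complex.ext rfl (by simpa using him)
  rw [hμ] at h
  exact_mod_cast h

theorem stmt_9_general (G δ D ξ₁ ξ₂ ξ₃ s : ℝ) (hG : 0 < G) (hδ : 0 < δ) (hD : 0 < D)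
    (hξ₁ : 0 < ξ₁) (hξ₃ : 0 < ξ₃) (hs : s ≤ 0) :
    ∀ μ : ℂ,
      ((Matrix.charpoly
        ((!![G / 3 * ξ₁ ^ 3, 0, -(ξ₁ ^ 2 / 2) * s;
             G / 3 * ξ₁ ^ 2 * ξ₂ - δ * ξ₂ / ξ₁, δ, -(1 / 2) * ξ₁ * ξ₂ * s;
             G / 2 * ξ₁ ^ 2 * ξ₃, 0, D - ξ₁ * ξ₃ * s] :
              Matrix (Fin 3) (Fin 3) ℝ).map Complex.ofReal)).IsRoot μ) →
        μ.im = 0 ∧ 0 < μ.re := by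
  intro μ hμ
  rw [Matrix.charpoly_fin_three_of_col_one _ (by simp) (by simp)] at hμ
  simp only [IsRoot, eval_mul, eval_sub, eval_X, eval_C, Matrix.map_apply, Matrix.of_apply,
    Matrix.cons_val', Matrix.cons_val_zero, Matrix.cons_val_one, Matrix.cons_val_two,
    Matrix.head_cons, Matrix.tail_cons, Matrix.empty_val', Matrix.cons_val_fin_one, Matrix.head_fin_const,
    ← Complex.ofReal_mul, mul_eq_zero, sub_eq_zero] at hμ
  rcases hμ with rfl | hblock
  · exact ⟨Complex.ofReal_im δ, by simpa using hδ⟩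
  · have hs' : 0 ≤ -s := neg_nonneg.mpr hs
    have hcross : 0 ≤ G * ξ₁ ^ 4 * (ξ₃ * -s) := by positivity
    refine Complex.im_eq_zero_and_re_pos_of_mul_sub_eq_ofReal ?_ ?_ ?_ hblock
    · nlinarith
    · nlinarith [pow_pos hξ₁ 3, mul_nonneg (mul_nonneg hξ₁.le hξ₃.le) hs']
    · nlinarith [mul_pos (pow_pos hξ₁ 3) (mul_pos hG hD)]

/-- Every complex eigenvalue of the diffusion matrix `a(ξ₁,ξ₂,ξ₃)` of the
quasilinear thin-film system with soluble surfactant is real and positive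
(here `s = σ'(ξ₃) ≤ 0`). -/
theorem stmt_9 (G δ D ξ₁ ξ₂ ξ₃ s : ℝ) (hG : 0 < G) (hδ : 0 < δ) (hD : 0 < D)
    (hξ₁ : 0 < ξ₁) (hξ₂ : 0 < ξ₂) (hξ₃ : 0 < ξ₃) (hs : s ≤ 0) :
    ∀ μ : ℂ,
      ((Matrix.charpoly
        ((!![G / 3 * ξ₁ ^ 3, 0, -(ξ₁ ^ 2 / 2) * s;
             G / 3 * ξ₁ ^ 2 * ξ₂ - δ * ξ₂ / ξ₁, δ, -(1 / 2) * ξ₁ * ξ₂ * s;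
             G / 2 * ξ₁ ^ 2 * ξ₃, 0, D - ξ₁ * ξ₃ * s] :
              Matrix (Fin 3) (Fin 3) ℝ).map Complex.ofReal)).IsRoot μ) →
        μ.im = 0 ∧ 0 < μ.re :=
  stmt_9_general G δ D ξ₁ ξ₂ ξ₃ s hG hδ hD hξ₁ hξ₃ hs
end

section
/- Fix constants G, δ, D, β > 0, h⋆ > 0, a decreasing function σ ∈ C²(ℝ), and q with 0 < q < 16·G·D / (3·σ'(0)²) (assuming σ'(0) ≠ 0). For η⋆ > 0 set m⋆ := h⋆·η⋆/(β + h⋆) and Γ⋆ := β·η⋆/(β + h⋆), and let b_q(h⋆, m⋆, Γ⋆) be the real symmetric 3×3 matrix with rows ( (qG/3)h⋆³, (βG/6)h⋆²m⋆ − (δβ/2)(m⋆/h⋆), (G/4)h⋆³Γ⋆ − (q/4)h⋆²σ'(Γ⋆) ), ( (βG/6)h⋆²m⋆ − (δβ/2)(m⋆/h⋆), δβ, −(β/4)m⋆h⋆σ'(Γ⋆) ), ( (G/4)h⋆³Γ⋆ − (q/4)h⋆²σ'(Γ⋆), −(β/4)m⋆h⋆σ'(Γ⋆), D·h⋆ −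 h⋆²Γ⋆σ'(Γ⋆) ). Then there exists ε > 0 such that for all η⋆ ∈ (0, ε) the matrix b_q(h⋆, m⋆, Γ⋆) is positive definite. -/
/-!
At `η⋆ = 0` we have `m⋆ = Γ⋆ = 0`, so the matrix reduces to
`[[qGh⋆³/3, 0, -qh⋆²σ'(0)/4], [0, δβ, 0], [-qh⋆²σ'(0)/4, 0, Dh⋆]]`, whose leading minors are
`qGh⋆³/3`, `qGh⋆³δβ/3` and `δβqh⋆⁴(16GD - 3qσ'(0)²)/48`; the bound on `q` is exactly the
positivity of the last one. The entries depend continuously on `η⋆` because `σ'` is continuous,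
so the minors stay positive for small `η⋆`, and Sylvester's criterion concludes.
-/

namespace Matrix

section
variable {R : Type*} [CommRing R] [StarRing R] [TrivialStar R]

theorem dotProduct_mulVec_symm_fin_three (a b c d e f : R) (x : Fin 3 → R) :
    star x ⬝ᵥ (!![a, d, e; d, b, f; e, f, c] *ᵥ x) =
      a * x 0 ^ 2 + b * x 1 ^ 2 + c * x 2 ^ 2 + 2 * d * x 0 * x 1 + 2 * e * x 0 * x 2
        + 2 * f * x 1 * x 2 := by
  simp only [dotProduct, Pi.star_apply, star_trivial, mulVec, of_apply, cons_val',
    cons_val_fin_one, Fin.sum_univ_three, Fin.isValue, cons_val_zero, cons_val_one, cons_val]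
  ring

theorem isHermitian_symm_fin_three (a b c d e f : R) :
    (!![a, d, e; d, b, f; e, f, c]).IsHermitian := by
  ext i j
  fin_cases i <;> fin_cases j <;> simp

end

variable {𝕜 : Type*} [Field 𝕜] [LinearOrder 𝕜] [IsStrictOrderedRing 𝕜] [StarRing 𝕜]
  [TrivialStar 𝕜]

theorem posDef_symm_fin_three_of_minors_pos {a b c d e f : 𝕜} (ha : 0 < a)
    (h₂ : 0 < a * b - d ^ 2) (h₃ : 0 < (!![a, d, e; d, b, f; e, f, c]).det) :
    (!![a, d, e; d, b, f; e, f, c]).PosDef := by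
  refine .of_dotProduct_mulVec_pos (isHermitian_symm_fin_three a b c d e f) fun x hx => ?_
  rw [dotProduct_mulVec_symm_fin_three]
  set Δ₂ := a * b - d ^ 2
  set Δ₃ := (!![a, d, e; d, b, f; e, f, c]).det
  set u := a * x 0 + d * x 1 + e * x 2
  set v := Δ₂ * x 1 + (a * f - d * e) * x 2
  -- `LDLᵀ`: complete the square in `x 0`, then in `x 1`
  have hsquares : a * Δ₂ * (a * x 0 ^ 2 + b * x 1 ^ 2 + c * x 2 ^ 2 + 2 * d * x 0 * x 1
      + 2 * e * x 0 * x 2 + 2 * f * x 1 * x 2) = Δ₂ * u ^ 2 + v ^ 2 + a * Δ₃ * x 2 ^ 2 := by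
    simp only [Δ₂, Δ₃, u, v, det_fin_three, of_apply, cons_val', cons_val_fin_one,
      Fin.isValue, cons_val_zero, cons_val_one, cons_val]
    ring
  refine pos_of_mul_pos_right (hsquares ▸ ?_) (mul_pos ha h₂).le
  rcases ne_or_eq (x 2) 0 with h2 | h2
  · have := mul_pos (mul_pos ha h₃) (sq_pos_of_ne_zero h2)
    positivity
  rcases ne_or_eq (x 1) 0 with h1 | h1
  · have : v ≠ 0 := by simp [v, h2, h1, h₂.ne']
    positivity
  have h0 : x 0 ≠ 0 := fun h0 => hx (funext fun i => by fin_cases i <;> assumption)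
  have : u ≠ 0 := by simp [u, h2, h1, h0, ha.ne']
  positivity

open Topology in
theorem eventually_posDef_symm_fin_three [TopologicalSpace 𝕜] [OrderClosedTopology 𝕜]
    [IsTopologicalRing 𝕜] {X : Type*} [TopologicalSpace X] {a b c d e f : X → 𝕜}
    (ha : Continuous a) (hb : Continuous b) (hc : Continuous c) (hd : Continuous d)
    (he : Continuous e) (hf : Continuous f) {x₀ : X} (h₁ : 0 < a x₀)
    (h₂ : 0 < a x₀ * b x₀ - d x₀ ^ 2)
    (h₃ : 0 < (!![a x₀, d x₀, e x₀; d x₀, b x₀, f x₀; e x₀, f x₀, c x₀]).det) :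
    ∀ᶠ x in 𝓝 x₀, (!![a x, d x, e x; d x, b x, f x; e x, f x, c x]).PosDef := by
  have hdet : Continuous fun x => (!![a x, d x, e x; d x, b x, f x; e x, f x, c x]).det :=
    (continuous_matrix fun i j => by fin_cases i <;> fin_cases j <;> simpa).matrix_det
  filter_upwards [(ha.tendsto x₀).eventually_const_lt h₁,
    ((ha.mul hb).sub (hd.pow 2)).tendsto x₀ |>.eventually_const_lt h₂,
    (hdet.tendsto x₀).eventually_const_lt h₃] with x h₁ h₂ h₃
  exact posDef_symm_fin_three_of_minors_pos h₁ h₂ h₃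

end Matrix

open Matrix

theorem stmt_12_general (G δ D β hstar q : ℝ) (σ : ℝ → ℝ)
    (hG : 0 < G) (hδ : 0 < δ) (hβ : 0 < β) (hh : 0 < hstar)
    (hσ : ContDiff ℝ 2 σ) (hσ0 : deriv σ 0 ≠ 0)
    (hq0 : 0 < q) (hq : q < 16 * G * D / (3 * (deriv σ 0) ^ 2)) :
    ∃ ε > 0, ∀ ηstar ∈ Set.Ioo (0:ℝ) ε,
      (fun (mstar Γstar : ℝ) =>
        (!![q * G / 3 * hstar ^ 3,
            β * G / 6 * hstar ^ 2 * mstar - δ * β / 2 * (mstar / hstar),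
            G / 4 * hstar ^ 3 * Γstar - q / 4 * hstar ^ 2 * deriv σ Γstar;
            β * G / 6 * hstar ^ 2 * mstar - δ * β / 2 * (mstar / hstar),
            δ * β,
            -(β / 4) * mstar * hstar * deriv σ Γstar;
            G / 4 * hstar ^ 3 * Γstar - q / 4 * hstar ^ 2 * deriv σ Γstar,
            -(β / 4) * mstar * hstar * deriv σ Γstar,
            D * hstar - hstar ^ 2 * Γstar * deriv σ Γstar] :
          Matrix (Fin 3) (Fin 3) ℝ).PosDef)
        (hstar * ηstar / (β + hstar)) (β * ηstar / (β + hstar)) := by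
  have hσ' : Continuous (deriv σ) := hσ.continuous_deriv one_le_two
  have hq' : q * (3 * deriv σ 0 ^ 2) < 16 * G * D := (lt_div_iff₀ (by positivity)).mp hq
  have hdet₀ : (!![q * G / 3 * hstar ^ 3, 0, -(q / 4 * hstar ^ 2 * deriv σ 0); 0, δ * β, 0;
      -(q / 4 * hstar ^ 2 * deriv σ 0), 0, D * hstar] : Matrix (Fin 3) (Fin 3) ℝ).det =
      δ * β * q * hstar ^ 4 / 48 * (16 * G * D - q * (3 * deriv σ 0 ^ 2)) := by
    simp only [det_fin_three, Fin.isValue, of_apply, cons_val', cons_val_zero, cons_val_fin_one,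
      cons_val_one, cons_val, mul_zero, sub_zero, zero_mul, mul_neg, neg_zero, add_zero, neg_mul,
      neg_neg]
    ring
  refine (nhdsGT_basis 0).eventually_iff.mp (.filter_mono nhdsWithin_le_nhds ?_)
  beta_reduce
  refine eventually_posDef_symm_fin_three (by fun_prop) (by fun_prop) (by fun_prop) (by fun_prop)
    (by fun_prop) (by fun_prop) (by positivity)
    (by simp only [mul_zero, zero_div, sub_self, ne_eq, OfNat.ofNat_ne_zero, not_false_eq_true,
      zero_pow, sub_zero]; positivity) ?_
  simpa [hdet₀] using mul_pos (by positivity) (sub_pos.mpr hq')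

/-- For small equilibrium surfactant level `η⋆`, the matrix
`b_q(h⋆, m⋆, Γ⋆)` governing the weighted L² energy identity for the
linearized thin-film system is positive definite. -/
theorem stmt_12 (G δ D β hstar q : ℝ) (σ : ℝ → ℝ)
    (hG : 0 < G) (hδ : 0 < δ) (hD : 0 < D) (hβ : 0 < β) (hh : 0 < hstar)
    (hσ : ContDiff ℝ 2 σ) (hσdec : StrictAnti σ) (hσ0 : deriv σ 0 ≠ 0)
    (hq0 : 0 < q) (hq : q < 16 * G * D / (3 * (deriv σ 0) ^ 2)) :
    ∃ ε > 0, ∀ ηstar ∈ Set.Ioo (0:ℝ) ε,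
      (fun (mstar Γstar : ℝ) =>
        (!![q * G / 3 * hstar ^ 3,
            β * G / 6 * hstar ^ 2 * mstar - δ * β / 2 * (mstar / hstar),
            G / 4 * hstar ^ 3 * Γstar - q / 4 * hstar ^ 2 * deriv σ Γstar;
            β * G / 6 * hstar ^ 2 * mstar - δ * β / 2 * (mstar / hstar),
            δ * β,
            -(β / 4) * mstar * hstar * deriv σ Γstar;
            G / 4 * hstar ^ 3 * Γstar - q / 4 * hstar ^ 2 * deriv σ Γstar,
            -(β / 4) * mstar * hstar * deriv σ Γstar,
            D * hstar - hstar ^ 2 * Γstar * deriv σ Γstar] :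
          Matrix (Fin 3) (Fin 3) ℝ).PosDef)
        (hstar * ηstar / (β + hstar)) (β * ηstar / (β + hstar)) :=
  stmt_12_general G δ D β hstar q σ hG hδ hβ hh hσ hσ0 hq0 hq
end

section
/- Fix constants L, β, h⋆ > 0. There exists a constant c > 0, depending only on L, β and h⋆, such that for all C¹ functions m, Γ : [0,L] → ℝ with ∫₀ᴸ (m(x) + Γ(x)) dx = 0, one has ∫₀ᴸ (m² + Γ²) dx ≤ c·( ∫₀ᴸ (β·m − h⋆·Γ)² dx + ∫₀ᴸ ( (∂ₓm)² + (∂ₓΓ)² ) dx ). -/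
/-!
The sum `s = m + Γ` has mean zero, so it vanishes somewhere in `[0, L]`; writing `s x ^ 2` as
the integral of `2 s s'` from that zero and applying AM-GM gives the Poincaré inequality
`∫ s² ≤ 4 L² ∫ s'²`. Both `m` and `Γ` are combinations of `s` and `d = β m - h⋆ Γ` with
coefficients of the form `· / (β + h⋆)`, so `∫ (m² + Γ²)` is controlled by `∫ d²` and `∫ s²`.
-/

open Set intervalIntegral
open scoped Interval

theorem exists_mem_Icc_eq_zero_of_intervalIntegral_eq_zero {f : ℝ → ℝ} {a b : ℝ}
    (hab : a < b) (hf : ContinuousOn f (Icc a b)) (h : ∫ x in a..b, f x = 0) :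
    ∃ c ∈ Icc a b, f c = 0 := by
  rw [← uIcc_of_le hab.le] at hf
  obtain ⟨c, hc, hfc⟩ := exists_eq_interval_average hab.ne hf
  rw [interval_average_eq_div, h, zero_div] at hfc
  rw [uIoo_of_le hab.le] at hc
  exact ⟨c, Ioo_subset_Icc_self hc, hfc⟩

section Poincare

variable {s : ℝ → ℝ} {a b : ℝ}

theorem sq_le_integral_abs_mul_deriv_of_eq_zero (hs : ContDiff ℝ 1 s) {x₀ x : ℝ}
    (hx₀ : x₀ ∈ Icc a b) (hx : x ∈ Icc a b) (hsx₀ : s x₀ = 0) :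
    s x ^ 2 ≤ ∫ t in a..b, |2 * s t * deriv s t| := by
  have hds : Continuous (deriv s) := hs.continuous_deriv le_rfl
  have hftc : ∫ t in x₀..x, 2 * s t * deriv s t = s x ^ 2 := by
    rw [integral_eq_sub_of_hasDerivAt (f := fun t => s t ^ 2), hsx₀]
    · ring
    · intro t _
      simpa using ((hs.differentiable one_ne_zero) t).hasDerivAt.fun_pow 2
    · exact ((continuous_const.mul hs.continuous).mul hds).intervalIntegrable _ _
  have hsub : Ι x₀ x ⊆ Ι a b := by
    rw [uIoc_of_le (hx₀.1.trans hx₀.2)]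
    exact Ioc_subset_Ioc (le_min hx₀.1 hx.1) (max_le hx₀.2 hx.2)
  calc s x ^ 2 ≤ |(∫ t in x₀..x, |2 * s t * deriv s t|)| := by
        rw [← hftc]
        refine (le_abs_self _).trans ?_
        simpa only [Real.norm_eq_abs] using
          norm_integral_le_abs_integral_norm (f := fun t => 2 * s t * deriv s t)
            (μ := MeasureTheory.volume)
    _ ≤ |(∫ t in a..b, |2 * s t * deriv s t|)| :=
        abs_integral_mono_interval hsub (Filter.Eventually.of_forall fun t => abs_nonneg _)
          (((continuous_const.mul hs.continuous).mul hds).abs.intervalIntegrable _ _)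
    _ = ∫ t in a..b, |2 * s t * deriv s t| :=
        abs_of_nonneg (integral_nonneg (hx₀.1.trans hx₀.2) fun t _ => abs_nonneg _)

theorem integral_sq_le_of_eq_zero_of_mem_Icc (hs : ContDiff ℝ 1 s) (hab : a < b) {x₀ : ℝ}
    (hx₀ : x₀ ∈ Icc a b) (hsx₀ : s x₀ = 0) :
    ∫ x in a..b, s x ^ 2 ≤ 4 * (b - a) ^ 2 * ∫ x in a..b, deriv s x ^ 2 := by
  set ℓ := b - a
  have hℓ : 0 < ℓ := sub_pos.mpr hab
  have hds : Continuous (deriv s) := hs.continuous_deriv le_rfl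
  have hs2 : IntervalIntegrable (fun x => s x ^ 2) MeasureTheory.volume a b :=
    (hs.continuous.pow 2).intervalIntegrable _ _
  have hds2 : IntervalIntegrable (fun x => deriv s x ^ 2) MeasureTheory.volume a b :=
    (hds.pow 2).intervalIntegrable _ _
  -- the weights make `∫ s²` come back below with the factor `1 / 2`, so it can be absorbed
  have amgm : ∀ t, |2 * s t * deriv s t| ≤ (2 * ℓ)⁻¹ * s t ^ 2 + 2 * ℓ * deriv s t ^ 2 := by
    intro t
    calc |2 * s t * deriv s t| = (2 * ℓ)⁻¹ * (2 * |s t| * (2 * ℓ * |deriv s t|)) := by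
          rw [abs_mul, abs_mul, abs_two]; field_simp
      _ ≤ (2 * ℓ)⁻¹ * (|s t| ^ 2 + (2 * ℓ * |deriv s t|) ^ 2) := by
          gcongr; exact two_mul_le_add_sq _ _
      _ = (2 * ℓ)⁻¹ * s t ^ 2 + 2 * ℓ * deriv s t ^ 2 := by
          rw [mul_pow, sq_abs, sq_abs]; field_simp
  set B := (2 * ℓ)⁻¹ * (∫ x in a..b, s x ^ 2) + 2 * ℓ * ∫ x in a..b, deriv s x ^ 2
  have hB : ∀ x ∈ Icc a b, s x ^ 2 ≤ B := by
    intro x hx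
    calc s x ^ 2 ≤ ∫ t in a..b, |2 * s t * deriv s t| :=
          sq_le_integral_abs_mul_deriv_of_eq_zero hs hx₀ hx hsx₀
      _ ≤ ∫ t in a..b, ((2 * ℓ)⁻¹ * s t ^ 2 + 2 * ℓ * deriv s t ^ 2) :=
          integral_mono_on hab.le
            (((continuous_const.mul hs.continuous).mul hds).abs.intervalIntegrable _ _)
            ((hs2.const_mul _).add (hds2.const_mul _)) fun t _ => amgm t
      _ = B := by
          rw [integral_add (hs2.const_mul _) (hds2.const_mul _),
            intervalIntegral.integral_const_mul, intervalIntegral.integral_const_mul]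
  have hint := integral_mono_on hab.le hs2 intervalIntegrable_const hB
  rw [intervalIntegral.integral_const, smul_eq_mul] at hint
  have hℓB :
      ℓ * B = (∫ x in a..b, s x ^ 2) / 2 + 2 * ℓ ^ 2 * ∫ x in a..b, deriv s x ^ 2 := by
    simp only [B]; field_simp
  linarith

theorem integral_sq_le_of_integral_eq_zero (hs : ContDiff ℝ 1 s) (hab : a < b)
    (h : ∫ x in a..b, s x = 0) :
    ∫ x in a..b, s x ^ 2 ≤ 4 * (b - a) ^ 2 * ∫ x in a..b, deriv s x ^ 2 := by
  obtain ⟨x₀, hx₀, hsx₀⟩ :=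
    exists_mem_Icc_eq_zero_of_intervalIntegral_eq_zero hab hs.continuous.continuousOn h
  exact integral_sq_le_of_eq_zero_of_mem_Icc hs hab hx₀ hsx₀

end Poincare

theorem add_sq_mul_sq_add_sq_le (β h x y : ℝ) :
    (β + h) ^ 2 * (x ^ 2 + y ^ 2) ≤
      4 * (β * x - h * y) ^ 2 + 2 * (β ^ 2 + h ^ 2) * (x + y) ^ 2 := by
  -- `(β + h) x = (β x - h y) + h (x + y)`, `(β + h) y = β (x + y) - (β x - h y)`, and
  -- `(u + v) ^ 2 ≤ 2 (u ^ 2 + v ^ 2)` for each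
  nlinarith [sq_nonneg (β * x - h * y - h * (x + y)), sq_nonneg (β * (x + y) + (β * x - h * y))]

section Pair

variable {m Γ : ℝ → ℝ} {a b : ℝ}

theorem integral_add_sq_le_of_integral_add_eq_zero (hm : ContDiff ℝ 1 m)
    (hΓ : ContDiff ℝ 1 Γ) (hab : a < b) (h : ∫ x in a..b, (m x + Γ x) = 0) :
    ∫ x in a..b, (m x + Γ x) ^ 2 ≤
      8 * (b - a) ^ 2 * ∫ x in a..b, (deriv m x ^ 2 + deriv Γ x ^ 2) := by
  have hderiv : deriv (fun x => m x + Γ x) = fun x => deriv m x + deriv Γ x :=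
    funext fun x => deriv_add (hm.differentiable one_ne_zero x) (hΓ.differentiable one_ne_zero x)
  have hP := integral_sq_le_of_integral_eq_zero (hm.add hΓ) hab h
  rw [hderiv] at hP
  have hdm : Continuous (deriv m) := hm.continuous_deriv le_rfl
  have hdΓ : Continuous (deriv Γ) := hΓ.continuous_deriv le_rfl
  have hsq : ∫ x in a..b, (deriv m x + deriv Γ x) ^ 2 ≤
      2 * ∫ x in a..b, (deriv m x ^ 2 + deriv Γ x ^ 2) := by
    rw [← intervalIntegral.integral_const_mul]
    exact integral_mono hab.le ((by fun_prop : Continuous _).intervalIntegrable _ _)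
      ((by fun_prop : Continuous _).intervalIntegrable _ _) fun x => add_sq_le
  calc _ ≤ 4 * (b - a) ^ 2 * ∫ x in a..b, (deriv m x + deriv Γ x) ^ 2 := hP
    _ ≤ 4 * (b - a) ^ 2 * (2 * ∫ x in a..b, (deriv m x ^ 2 + deriv Γ x ^ 2)) := by gcongr
    _ = _ := by ring

theorem add_sq_mul_integral_sq_add_sq_le (β h : ℝ) (hm : Continuous m) (hΓ : Continuous Γ)
    (hab : a ≤ b) :
    (β + h) ^ 2 * ∫ x in a..b, (m x ^ 2 + Γ x ^ 2) ≤
      4 * (∫ x in a..b, (β * m x - h * Γ x) ^ 2) +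
        2 * (β ^ 2 + h ^ 2) * ∫ x in a..b, (m x + Γ x) ^ 2 := by
  have hii : ∀ f : ℝ → ℝ, Continuous f → IntervalIntegrable f MeasureTheory.volume a b :=
    fun f hf => hf.intervalIntegrable _ _
  rw [← intervalIntegral.integral_const_mul, ← intervalIntegral.integral_const_mul,
    ← intervalIntegral.integral_const_mul,
    ← integral_add (hii _ (by fun_prop)) (hii _ (by fun_prop))]
  exact integral_mono hab (hii _ (by fun_prop)) (hii _ (by fun_prop))
    fun x => add_sq_mul_sq_add_sq_le β h (m x) (Γ x)

end Pair

/-- A Poincaré-type inequality: there is `c > 0` such that for all C¹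
functions `m, Γ` on `[0,L]` with `∫₀ᴸ (m + Γ) dx = 0`,
`∫₀ᴸ (m² + Γ²) ≤ c (∫₀ᴸ (βm − h⋆Γ)² + ∫₀ᴸ ((∂ₓm)² + (∂ₓΓ)²))`. -/
theorem stmt_14 (L β hstar : ℝ) (hL : 0 < L) (hβ : 0 < β) (hh : 0 < hstar) :
    ∃ c : ℝ, 0 < c ∧ ∀ m Γ : ℝ → ℝ, ContDiff ℝ 1 m → ContDiff ℝ 1 Γ →
      (∫ x in (0:ℝ)..L, (m x + Γ x)) = 0 →
      ∫ x in (0:ℝ)..L, ((m x) ^ 2 + (Γ x) ^ 2)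
        ≤ c * ((∫ x in (0:ℝ)..L, (β * m x - hstar * Γ x) ^ 2)
            + ∫ x in (0:ℝ)..L, ((deriv m x) ^ 2 + (deriv Γ x) ^ 2)) := by
  set Q := β ^ 2 + hstar ^ 2
  refine ⟨(4 + 16 * L ^ 2 * Q) / (β + hstar) ^ 2, by positivity, ?_⟩
  intro m Γ hm hΓ hmean
  have hsum := integral_add_sq_le_of_integral_add_eq_zero hm hΓ hL hmean
  rw [sub_zero] at hsum
  have hsplit := add_sq_mul_integral_sq_add_sq_le β hstar hm.continuous hΓ.continuous hL.le
  have hD : 0 ≤ ∫ x in (0:ℝ)..L, (β * m x - hstar * Γ x) ^ 2 :=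
    integral_nonneg hL.le fun x _ => sq_nonneg _
  have hE : 0 ≤ ∫ x in (0:ℝ)..L, ((deriv m x) ^ 2 + (deriv Γ x) ^ 2) :=
    integral_nonneg hL.le fun x _ => by positivity
  rw [div_mul_eq_mul_div, le_div_iff₀ (by positivity)]
  nlinarith [mul_le_mul_of_nonneg_left hsum (by positivity : (0:ℝ) ≤ 2 * Q),
    mul_nonneg (by positivity : (0:ℝ) ≤ 16 * L ^ 2 * Q) hD]
end
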